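/- Let L = ℤ^n, A, B ⊆ L primitive sublattices with (A⊗ℂ) ∩ (B⊗ℂ) = 0, and let g_1,...,g_b be a ℤ-basis of B adapted as in the Smith normal form construction, with elementary divisors d_1 | ... | d_b of the image of B in L/A. Then the map θ : ⊕_j ℤ/d_jℤ → exp_L(A⊗ℂ) ∩ exp_L(B⊗ℂ) sending (k_1,...,k_b) to exp_L(Σ_j (k_j/d_j) g_j) is an injective group homomorphism. -/

import Mathlib

open Complex

/-- The exponential `t ↦ e^{2πit}` as a unit of `ℂ`. -/
noncomputable def expu (t : ℂ) : ℂˣ :=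
  Units.mk0 (Complex.exp (2 * Real.pi * Complex.I * t)) (Complex.exp_ne_zero _)

/-- The coordinatewise exponential `exp_L : ℂⁿ → (ℂ*)ⁿ` as a group homomorphism. -/
noncomputable def expL (n : ℕ) : Multiplicative (Fin n → ℂ) →* (Fin n → ℂˣ) where
  toFun t i := expu (Multiplicative.toAdd t i)
  map_one' := by
    funext i
    apply Units.ext
    simp [expu]
  map_mul' a b := by
    funext i
    apply Units.ext
    simp [expu, mul_add, Complex.exp_add]

/-- Inclusion of the lattice `ℤⁿ` into `ℂⁿ`. -/
def zc {n : ℕ} (v : Fin n → ℤ) : Fin n → ℂ := fun i => (v i : ℂ)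

/-- The complexification `A ⊗ ℂ` of a sublattice `A ⊆ ℤⁿ`, as the ℂ-span of `A` in `ℂⁿ`. -/
noncomputable def VC {n : ℕ} (A : Submodule ℤ (Fin n → ℤ)) : Submodule ℂ (Fin n → ℂ) :=
  Submodule.span ℂ (zc '' (A : Set (Fin n → ℤ)))

/-- The subtorus `exp_L(V)` of `(ℂ*)ⁿ` associated to a ℂ-subspace `V ⊆ ℂⁿ`. -/
noncomputable def expT {n : ℕ} (V : Submodule ℂ (Fin n → ℂ)) : Subgroup (Fin n → ℂˣ) :=
  Subgroup.map (expL n) (AddSubgroup.toSubgroup V.toAddSubgroup)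

/-- A sublattice `A ⊆ ℤⁿ` is primitive if `ℤⁿ/A` is torsion-free. -/
def IsPrimitive {n : ℕ} (A : Submodule ℤ (Fin n → ℤ)) : Prop :=
  ∀ (m : ℤ) (x : Fin n → ℤ), m ≠ 0 → m • x ∈ A → x ∈ A

/-! `exp_L` has kernel `ℤⁿ`, so `exp_L(Σⱼ (kⱼ/dⱼ) gⱼ)` only depends on `k` modulo `d`; it lies
in `exp_L(B⊗ℂ)` trivially, and in `exp_L(A⊗ℂ)` because `gⱼ ≡ dⱼ hⱼ (mod A)` turns
`Σⱼ (kⱼ/dⱼ) gⱼ` into `Σⱼ kⱼ hⱼ ∈ ℤⁿ` modulo `A⊗ℂ`. If the value is `1`, then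
`m := Σⱼ (kⱼ/dⱼ) gⱼ ∈ ℤⁿ`, `(∏ dⱼ) m ∈ B`, so `m ∈ B` by primitivity; the `gⱼ` are independent
(their images `dⱼ e'ⱼ` in `L/A` are), and comparing coefficients gives `dⱼ ∣ kⱼ`. -/

theorem LinearIndependent.smul_of_ne_zero {R M ι : Type*} [Ring R] [NoZeroDivisors R]
    [AddCommGroup M] [Module R M] {v : ι → M} (hv : LinearIndependent R v) {c : ι → R}
    (hc : ∀ i, c i ≠ 0) : LinearIndependent R (fun i => c i • v i) := by
  rw [linearIndependent_iff'] at hv ⊢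
  intro s f hsum i hi
  simp only [smul_smul] at hsum
  exact (mul_eq_zero.mp (hv s _ hsum i hi)).resolve_right (hc i)

theorem expu_eq_one_iff (t : ℂ) : expu t = 1 ↔ ∃ m : ℤ, t = m := by
  have h2πi : 2 * (Real.pi : ℂ) * I ≠ 0 := by simp [Real.pi_ne_zero, I_ne_zero]
  rw [← Units.val_inj, expu, Units.val_mk0, Units.val_one, exp_eq_one_iff]
  refine exists_congr fun m => ⟨fun h => mul_left_cancel₀ h2πi ?_, fun h => ?_⟩ <;>
    [rw [h]; rw [h]] <;> ring

theorem zc_injective {n : ℕ} : Function.Injective (zc (n := n)) :=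
  fun _ _ h => funext fun i => Int.cast_injective (congrFun h i)

theorem zc_smul {n : ℕ} (c : ℤ) (w : Fin n → ℤ) : zc (c • w) = (c : ℂ) • zc w := by
  funext i
  simp [zc]

theorem expL_ofAdd_eq_one_iff {n : ℕ} (v : Fin n → ℂ) :
    expL n (Multiplicative.ofAdd v) = 1 ↔ ∃ w : Fin n → ℤ, v = zc w := by
  simp only [funext_iff, expL, MonoidHom.coe_mk, OneHom.coe_mk, Pi.one_apply, toAdd_ofAdd,
    expu_eq_one_iff, zc]
  exact ⟨fun h => ⟨fun i => (h i).choose, fun i => (h i).choose_spec⟩,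
    fun ⟨w, hw⟩ i => ⟨w i, hw i⟩⟩

theorem expL_ofAdd_add_zc {n : ℕ} (v : Fin n → ℂ) (w : Fin n → ℤ) :
    expL n (Multiplicative.ofAdd (v + zc w)) = expL n (Multiplicative.ofAdd v) := by
  rw [ofAdd_add, map_mul, (expL_ofAdd_eq_one_iff _).mpr ⟨w, rfl⟩, mul_one]

theorem zc_mem_VC {n : ℕ} {A : Submodule ℤ (Fin n → ℤ)} {a : Fin n → ℤ} (ha : a ∈ A) :
    zc a ∈ VC A :=
  Submodule.subset_span ⟨a, ha, rfl⟩

theorem expL_mem_expT {n : ℕ} {V : Submodule ℂ (Fin n → ℂ)} {v : Fin n → ℂ} (w : Fin n → ℤ)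
    (h : v - zc w ∈ V) : expL n (Multiplicative.ofAdd v) ∈ expT V :=
  ⟨Multiplicative.ofAdd (v - zc w), h, by rw [← expL_ofAdd_add_zc (v - zc w) w, sub_add_cancel]⟩

section FracComb

variable {n b : ℕ} (d : Fin b → ℕ) (g : Fin b → Fin n → ℤ)

noncomputable def fracComb (k : Fin b → ℤ) : Fin n → ℂ :=
  ∑ j, ((k j : ℂ) / (d j : ℂ)) • zc (g j)

theorem fracComb_add (k k' : Fin b → ℤ) :
    fracComb d g (k + k') = fracComb d g k + fracComb d g k' := by
  simp only [fracComb, ← Finset.sum_add_distrib, ← add_smul, Pi.add_apply, Int.cast_add, add_div]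

theorem fracComb_smul (c : ℤ) (k : Fin b → ℤ) :
    fracComb d g (c • k) = (c : ℂ) • fracComb d g k := by
  simp only [fracComb, Finset.smul_sum, smul_smul, Pi.smul_apply, smul_eq_mul, Int.cast_mul,
    mul_div_assoc]

theorem fracComb_mem_VC {B : Submodule ℤ (Fin n → ℤ)} (hgB : ∀ j, g j ∈ B) (k : Fin b → ℤ) :
    fracComb d g k ∈ VC B :=
  Submodule.sum_mem _ fun j _ => Submodule.smul_mem _ _ (zc_mem_VC (hgB j))

variable {d}

theorem fracComb_mul_left (hd : ∀ j, d j ≠ 0) (q : Fin b → ℤ) :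
    fracComb d g (fun j => d j * q j) = zc (∑ j, q j • g j) := by
  funext i
  simp only [fracComb, zc, Finset.sum_apply, Pi.smul_apply, smul_eq_mul, Int.cast_sum,
    Int.cast_mul, Int.cast_natCast]
  refine Finset.sum_congr rfl fun j _ => ?_
  rw [mul_div_cancel_left₀ _ (Nat.cast_ne_zero.mpr (hd j))]

theorem fracComb_smul_left (hd : ∀ j, d j ≠ 0) (h : Fin b → Fin n → ℤ) (k : Fin b → ℤ) :
    fracComb d (fun j => (d j : ℤ) • h j) k = zc (∑ j, k j • h j) := by
  funext i
  simp only [fracComb, zc, Finset.sum_apply, Pi.smul_apply, smul_eq_mul, Int.cast_sum,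
    Int.cast_mul, Int.cast_natCast]
  refine Finset.sum_congr rfl fun j _ => ?_
  have : (d j : ℂ) ≠ 0 := Nat.cast_ne_zero.mpr (hd j)
  field_simp

theorem fracComb_sub_left (g' : Fin b → Fin n → ℤ) (k : Fin b → ℤ) :
    fracComb d (g - g') k = fracComb d g k - fracComb d g' k := by
  simp only [fracComb, ← Finset.sum_sub_distrib, ← smul_sub]
  congr! 3
  funext i
  simp [zc]

theorem expL_fracComb_congr (hd : ∀ j, d j ≠ 0) {k k' : Fin b → ℤ}
    (h : ∀ j, (d j : ℤ) ∣ k j - k' j) :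
    expL n (Multiplicative.ofAdd (fracComb d g k)) =
      expL n (Multiplicative.ofAdd (fracComb d g k')) := by
  choose q hq using h
  have hk : k = k' + fun j => d j * q j := by funext j; simp [← hq]
  rw [hk, fracComb_add, fracComb_mul_left g hd, expL_ofAdd_add_zc]


theorem dvd_of_fracComb_eq_zc (hd : ∀ j, d j ≠ 0)
    (hprim : IsPrimitive (Submodule.span ℤ (Set.range g))) (hli : LinearIndependent ℤ g)
    {k : Fin b → ℤ} {m : Fin n → ℤ} (h : fracComb d g k = zc m) (j : Fin b) :
    (d j : ℤ) ∣ k j := by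
  set D := ∏ j, d j
  have hD : (D : ℤ) ≠ 0 := Nat.cast_ne_zero.mpr (Finset.prod_ne_zero_iff.mpr fun j _ => hd j)
  have hdD : ∀ j, (d j : ℤ) * (D / d j : ℕ) = D := fun j => by
    exact_mod_cast Nat.mul_div_cancel' (Finset.dvd_prod_of_mem d (Finset.mem_univ j))
  have hDm : (D : ℤ) • m = ∑ j, ((D / d j : ℕ) * k j : ℤ) • g j := by
    apply zc_injective
    have hDk : (D : ℤ) • k = fun j => d j * ((D / d j : ℕ) * k j) := by
      funext j
      rw [Pi.smul_apply, smul_eq_mul, ← mul_assoc, hdD]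
    rw [zc_smul, ← h, ← fracComb_smul, hDk, fracComb_mul_left g hd]
  have hm : m ∈ Submodule.span ℤ (Set.range g) :=
    hprim D m hD (hDm ▸ Submodule.sum_mem _ fun j _ => Submodule.smul_mem _ _
      (Submodule.subset_span ⟨j, rfl⟩))
  obtain ⟨c, rfl⟩ := (Submodule.mem_span_range_iff_exists_fun ℤ).mp hm
  have hcoef := Fintype.linearIndependent_iffₛ.mp hli (fun j => (D : ℤ) * c j)
    (fun j => ((D / d j : ℕ) : ℤ) * k j) (by rw [← hDm, Finset.smul_sum]; simp only [smul_smul]) j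
  refine ⟨c j, mul_left_cancel₀ (?_ : ((D / d j : ℕ) : ℤ) ≠ 0) ?_⟩
  · rintro h0; rw [← hdD j, h0, mul_zero] at hD; exact hD rfl
  · rw [← hcoef, ← hdD j]; ring

variable (d) in
noncomputable def expFracCombHom [∀ j, NeZero (d j)] :
    Multiplicative (∀ j, ZMod (d j)) →* (Fin n → ℂˣ) :=
  MonoidHom.mk' (fun x => expL n (.ofAdd (fracComb d g fun j => (ZMod.cast (x.toAdd j) : ℤ))))
    fun x y => by
      rw [← map_mul, ← ofAdd_add, ← fracComb_add]
      refine expL_fracComb_congr g (fun j => NeZero.ne _) fun j => ?_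
      rw [← ZMod.intCast_eq_intCast_iff_dvd_sub]
      simp only [Pi.add_apply, Int.cast_add, ZMod.intCast_zmod_cast, toAdd_mul]

variable [∀ j, NeZero (d j)]

theorem expFracCombHom_ofAdd_intCast (k : Fin b → ℤ) :
    expFracCombHom d g (.ofAdd fun j => (k j : ZMod (d j))) =
      expL n (.ofAdd (fracComb d g k)) :=
  expL_fracComb_congr g (fun j => NeZero.ne _) fun j => by
    rw [← ZMod.intCast_eq_intCast_iff_dvd_sub, toAdd_ofAdd, ZMod.intCast_zmod_cast]

theorem expFracCombHom_injective (hprim : IsPrimitive (Submodule.span ℤ (Set.range g)))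
    (hli : LinearIndependent ℤ g) : Function.Injective (expFracCombHom d g) := by
  rw [injective_iff_map_eq_one]
  intro x hx
  obtain ⟨m, hm⟩ := (expL_ofAdd_eq_one_iff _).mp hx
  change Multiplicative.toAdd x = 0
  funext j
  rw [Pi.zero_apply, ← ZMod.intCast_zmod_cast (x.toAdd j), ZMod.intCast_zmod_eq_zero_iff_dvd]
  exact dvd_of_fracComb_eq_zc g (fun j => NeZero.ne _) hprim hli hm j

theorem expFracCombHom_mem_expT_VC {B : Submodule ℤ (Fin n → ℤ)} (hgB : ∀ j, g j ∈ B)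
    (x : Multiplicative (∀ j, ZMod (d j))) : expFracCombHom d g x ∈ expT (VC B) :=
  Subgroup.mem_map_of_mem _ (fracComb_mem_VC d g hgB _)

theorem expFracCombHom_mem_expT_VC_of_sub_smul_mem {A : Submodule ℤ (Fin n → ℤ)}
    (h : Fin b → Fin n → ℤ) (hgA : ∀ j, g j - (d j : ℤ) • h j ∈ A)
    (x : Multiplicative (∀ j, ZMod (d j))) : expFracCombHom d g x ∈ expT (VC A) := by
  refine expL_mem_expT (∑ j, (ZMod.cast (x.toAdd j) : ℤ) • h j) ?_
  rw [← fracComb_smul_left (fun j => NeZero.ne (d j)), ← fracComb_sub_left]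
  exact fracComb_mem_VC d _ hgA _

end FracComb

theorem stmt_15_general (n : ℕ) (A B : Submodule ℤ (Fin n → ℤ))
    (hB : IsPrimitive B)
    (b N : ℕ) (hbN : b ≤ N)
    (e' : Module.Basis (Fin N) ℤ ((Fin n → ℤ) ⧸ A))
    (d : Fin b → ℕ) (hd : ∀ j, 0 < d j)
    (g : Fin b → (Fin n → ℤ))
    (hspan : Submodule.span ℤ (Set.range g) = B)
    (hg : ∀ j, A.mkQ (g j) = (d j : ℤ) • e' (Fin.castLE hbN j)) :
    ∃ θ : Multiplicative (∀ j, ZMod (d j)) →* (Fin n → ℂˣ),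
      Function.Injective θ ∧
      (∀ x, θ x ∈ (expT (VC A) ⊓ expT (VC B) : Subgroup (Fin n → ℂˣ))) ∧
      (∀ k : Fin b → ℤ,
        θ (Multiplicative.ofAdd fun j => (k j : ZMod (d j))) =
          expL n (Multiplicative.ofAdd (∑ j, ((k j : ℂ) / (d j : ℂ)) • zc (g j)))) := by
  have : ∀ j, NeZero (d j) := fun j => ⟨(hd j).ne'⟩
  have hli : LinearIndependent ℤ g := LinearIndependent.of_comp A.mkQ <| by
    simpa only [Function.comp_def, hg] using
      (e'.linearIndependent.comp _ (Fin.castLE_injective hbN)).smul_of_ne_zero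
        (c := fun j => (d j : ℤ)) fun j => NeZero.ne _
  choose h hh using fun j => A.mkQ_surjective (e' (Fin.castLE hbN j))
  have hgA : ∀ j, g j - (d j : ℤ) • h j ∈ A := fun j => by
    rw [← Submodule.ker_mkQ A, LinearMap.mem_ker, map_sub, map_smul, hg, hh, sub_self]
  refine ⟨expFracCombHom d g, expFracCombHom_injective g (hspan ▸ hB) hli, fun x => ⟨?_, ?_⟩,
    expFracCombHom_ofAdd_intCast g⟩
  · exact expFracCombHom_mem_expT_VC_of_sub_smul_mem g h hgA x
  · exact expFracCombHom_mem_expT_VC g (fun j => hspan ▸ Submodule.subset_span ⟨j, rfl⟩) x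

/-- With `A, B ⊆ ℤⁿ` primitive, `(A⊗ℂ) ∩ (B⊗ℂ) = 0`, and `g₁,...,g_b` a ℤ-basis of `B`
adapted to the Smith normal form of the image of `B` in `ℤⁿ/A` with elementary divisors
`d₁ | ... | d_b`, the map `θ : ⊕ⱼ ℤ/dⱼℤ → exp_L(A⊗ℂ) ∩ exp_L(B⊗ℂ)` sending
`(k₁,...,k_b)` to `exp_L(Σⱼ (kⱼ/dⱼ) gⱼ)` is a well-defined injective group homomorphism. -/
theorem stmt_15 (n : ℕ) (A B : Submodule ℤ (Fin n → ℤ))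
    (hA : IsPrimitive A) (hB : IsPrimitive B)
    (hAB : VC A ⊓ VC B = ⊥)
    (b N : ℕ) (hbN : b ≤ N)
    (e' : Module.Basis (Fin N) ℤ ((Fin n → ℤ) ⧸ A))
    (d : Fin b → ℕ) (hd : ∀ j, 0 < d j)
    (hdiv : ∀ i j : Fin b, i ≤ j → d i ∣ d j)
    (g : Fin b → (Fin n → ℤ))
    (hgB : ∀ j, g j ∈ B)
    (hspan : Submodule.span ℤ (Set.range g) = B)
    (hg : ∀ j, A.mkQ (g j) = (d j : ℤ) • e' (Fin.castLE hbN j)) :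
    ∃ θ : Multiplicative (∀ j, ZMod (d j)) →* (Fin n → ℂˣ),
      Function.Injective θ ∧
      (∀ x, θ x ∈ (expT (VC A) ⊓ expT (VC B) : Subgroup (Fin n → ℂˣ))) ∧
      (∀ k : Fin b → ℤ,
        θ (Multiplicative.ofAdd fun j => (k j : ZMod (d j))) =
          expL n (Multiplicative.ofAdd (∑ j, ((k j : ℂ) / (d j : ℂ)) • zc (g j)))) :=
  stmt_15_general n A B hB b N hbN e' d hd g hspan hg
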